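/- Let μ > 1 and let z = (z₁, z₂) ∈ Ω̃. Then φ̃(z) ∈ D_μ, i.e., 0 < |φ̃₁(z)| < 1 and |log |φ̃₂(z)|²| < arccos(|φ̃₁(z)|^μ). -/

import Mathlib

open MeasureTheory

/-- `log^t(z)`: the branch of the logarithm of `z` whose imaginary part lies in
`[log t², log t² + 2π)`. -/
noncomputable def logT (t : ℝ) (z : ℂ) : ℂ :=
  Complex.log z +
    ((2 * Real.pi * (⌈(Real.log (t ^ 2) - (Complex.log z).im) / (2 * Real.pi)⌉ : ℤ) : ℝ) : ℂ) *
      Complex.I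

/-- `ρ̃(z) = |z₁ + e^{i log|z₂|²}|² - 1`. -/
noncomputable def rhoT (z : ℂ × ℂ) : ℝ :=
  ‖z.1 + Complex.exp (Complex.I * (Real.log (‖z.2‖ ^ 2) : ℂ))‖ ^ 2 - 1

/-- `Ω̃ = {z ∈ ℂ × (ℂ∖{0}) : ρ̃(z) < 0}`. -/
def OmegaT : Set (ℂ × ℂ) := {z | z.2 ≠ 0 ∧ rhoT z < 0}

/-- `φ̃(z) = (exp((log^{|z₂|}(z₁) - log 2)/μ), z₂ exp(½(π + i log^{|z₂|}(z₁))))`. -/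
noncomputable def phiT (μ : ℝ) (z : ℂ × ℂ) : ℂ × ℂ :=
  (Complex.exp ((logT ‖z.2‖ z.1 - (Real.log 2 : ℂ)) / (μ : ℂ)),
   z.2 * Complex.exp (((Real.pi : ℂ) + Complex.I * logT ‖z.2‖ z.1) / 2))

/-- The Reinhardt domain
`D_μ = {w ∈ ℂ² : 0 < |w₁| < 1 and |log |w₂|²| < arccos(|w₁|^μ)}`. -/
def Dset (μ : ℝ) : Set (ℂ × ℂ) :=
  {w | 0 < ‖w.1‖ ∧ ‖w.1‖ < 1 ∧
    |Real.log (‖w.2‖ ^ 2)| < Real.arccos (‖w.1‖ ^ μ)}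

/-! Write `z₁ = r e^{i(L + θ)}` with `L = log |z₂|²`, `r = |z₁|` and `θ ∈ [0, 2π)` given by the branch
`log^{|z₂|}`. Then `ρ̃(z) = r (r + 2 cos θ)`, so `z ∈ Ω̃` forces `r > 0` and `cos θ < -r/2`, whence `r < 2`.
On the other side `|φ̃₁(z)|^μ = r/2` and `log |φ̃₂(z)|² = π - θ`, and `cos (π - θ) = -cos θ > r/2` with
`|π - θ| ≤ π` gives `|π - θ| < arccos (r/2)`. -/

open Complex in
theorem Complex.norm_ofReal_mul_exp_add_exp_sq (r α β : ℝ) :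
    ‖(r : ℂ) * exp (α * I) + exp (β * I)‖ ^ 2 = r ^ 2 + 2 * r * Real.cos (α - β) + 1 := by
  rw [Complex.sq_norm, normSq_apply]
  simp only [add_re, add_im, re_ofReal_mul, im_ofReal_mul, exp_ofReal_mul_I_re,
    exp_ofReal_mul_I_im, Real.cos_sub]
  nlinarith [Real.sin_sq_add_cos_sq α, Real.sin_sq_add_cos_sq β]

open Real in
theorem Real.abs_lt_arccos_of_lt_cos {x c : ℝ} (hx : |x| ≤ π) (hc : -1 ≤ c) (h : c < cos x) :
    |x| < arccos c := by
  rw [← arccos_cos (abs_nonneg x) hx, cos_abs]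
  exact strictAntiOn_arccos ⟨hc, h.le.trans (cos_le_one x)⟩ ⟨neg_one_le_cos x, cos_le_one x⟩ h

theorem logT_re (t : ℝ) (z : ℂ) : (logT t z).re = Real.log ‖z‖ := by
  simp [logT, Complex.log_re]

theorem logT_im (t : ℝ) (z : ℂ) :
    (logT t z).im = z.arg + 2 * Real.pi * ⌈(Real.log (t ^ 2) - z.arg) / (2 * Real.pi)⌉ := by
  simp [logT, Complex.log_im]

theorem logT_im_sub_mem_Ico (t : ℝ) (z : ℂ) :
    (logT t z).im - Real.log (t ^ 2) ∈ Set.Ico 0 (2 * Real.pi) := by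
  have hπ : 0 < 2 * Real.pi := by positivity
  set x := (Real.log (t ^ 2) - z.arg) / (2 * Real.pi) with hx
  have hx' : Real.log (t ^ 2) = z.arg + 2 * Real.pi * x := by
    rw [hx]; field_simp; ring
  rw [logT_im, ← hx, hx']
  constructor
  · nlinarith [Int.le_ceil x]
  · nlinarith [Int.ceil_lt_add_one x]

theorem norm_mul_exp_logT_im (t : ℝ) (z : ℂ) :
    (‖z‖ : ℂ) * Complex.exp ((logT t z).im * Complex.I) = z := by
  rw [logT_im]
  push_cast
  rw [add_mul, Complex.exp_add, mul_comm _ Complex.I, mul_comm (2 * (Real.pi : ℂ)) _,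
    mul_assoc, Complex.exp_int_mul_two_pi_mul_I, mul_one, mul_comm Complex.I]
  exact Complex.norm_mul_exp_arg_mul_I z

theorem rhoT_eq (z : ℂ × ℂ) :
    rhoT z = ‖z.1‖ * (‖z.1‖ +
      2 * Real.cos ((logT ‖z.2‖ z.1).im - Real.log (‖z.2‖ ^ 2))) := by
  have h := Complex.norm_ofReal_mul_exp_add_exp_sq ‖z.1‖ (logT ‖z.2‖ z.1).im (Real.log (‖z.2‖ ^ 2))
  rw [norm_mul_exp_logT_im] at h
  rw [rhoT, mul_comm Complex.I, h]
  ring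

theorem pos_and_add_two_mul_cos_neg_of_mem_OmegaT {z : ℂ × ℂ} (hz : z ∈ OmegaT) :
    0 < ‖z.1‖ ∧ ‖z.1‖ + 2 * Real.cos ((logT ‖z.2‖ z.1).im - Real.log (‖z.2‖ ^ 2)) < 0 := by
  have h := hz.2
  rw [rhoT_eq] at h
  rcases mul_neg_iff.1 h with h' | h'
  · exact h'
  · exact absurd h'.1 (norm_nonneg _).not_gt

theorem norm_phiT_fst_rpow {μ : ℝ} (hμ : μ ≠ 0) {z : ℂ × ℂ} (hz : z.1 ≠ 0) :
    ‖(phiT μ z).1‖ ^ μ = ‖z.1‖ / 2 := by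
  rw [phiT, Complex.norm_exp, Complex.div_ofReal_re, Complex.sub_re, Complex.ofReal_re, logT_re,
    Real.rpow_def_of_pos (Real.exp_pos _), Real.log_exp, div_mul_cancel₀ _ hμ, Real.exp_sub,
    Real.exp_log (norm_pos_iff.2 hz), Real.exp_log two_pos]

theorem log_norm_phiT_snd_sq (μ : ℝ) {z : ℂ × ℂ} (hz : z.2 ≠ 0) :
    Real.log (‖(phiT μ z).2‖ ^ 2) =
      Real.pi - ((logT ‖z.2‖ z.1).im - Real.log (‖z.2‖ ^ 2)) := by
  rw [phiT, norm_mul, Complex.norm_exp, mul_pow, ← Real.exp_nat_mul,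
    Real.log_mul (by positivity) (Real.exp_ne_zero _), Real.log_exp]
  simp [Complex.add_re]
  ring

theorem phiT_mem_Dset (μ : ℝ) (hμ : 1 < μ) (z : ℂ × ℂ) (hz : z ∈ OmegaT) :
    phiT μ z ∈ Dset μ := by
  obtain ⟨hr, hcos⟩ := pos_and_add_two_mul_cos_neg_of_mem_OmegaT hz
  obtain ⟨hθ₀, hθ₂π⟩ := logT_im_sub_mem_Ico ‖z.2‖ z.1
  set θ := (logT ‖z.2‖ z.1).im - Real.log (‖z.2‖ ^ 2)
  have hμ₀ : 0 < μ := by linarith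
  have hr2 : ‖z.1‖ / 2 < 1 := by linarith [Real.neg_one_le_cos θ]
  have hpow := norm_phiT_fst_rpow hμ₀.ne' (norm_pos_iff.1 hr)
  have hφ₁ : 0 < ‖(phiT μ z).1‖ := norm_pos_iff.2 (Complex.exp_ne_zero _)
  refine ⟨hφ₁, ?_, ?_⟩
  · rw [← hpow, Real.rpow_lt_one_iff_of_pos hφ₁] at hr2
    exact (hr2.resolve_left fun h => by linarith [h.2]).1
  · rw [log_norm_phiT_snd_sq μ hz.1, hpow]
    refine Real.abs_lt_arccos_of_lt_cos ?_ (by linarith) ?_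
    · rw [abs_le]; constructor <;> linarith
    · rw [Real.cos_pi_sub]; linarith
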